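/- arXiv:2008.13568 — 3 statements merged into one kernel-verified Lean document; each statement's English description precedes it below -/
import Mathlib

section
/- Let F be a finite field with |F| = q and let α₁,...,α_k be pairwise distinct elements of F. The number of matrices A ∈ Mₙ(F) all of whose eigenvalues (in any extension, i.e., all roots of the characteristic polynomial counted in F̄) lie in {α₁,...,α_k} AND which are diagonalizable equals the sum over all tuples (n₁,...,n_k) of nonnegative integers with n₁+...+n_k = n of |GLₙ(F)| / (|GL_{n₁}(F)|·...·|GL_{n_k}(F)|), where |GL₀(F)| := 1. -/
/-!
Conjugation by `GLₙ(F)` permutes the matrices in question, and the class of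
`diag(α_{d 1}, …, α_{d n})` is determined by the multiplicities `mᵢ = #d⁻¹(i)`: these are the
eigenspace dimensions `n - rank (A - αᵢ)`, which are conjugation invariant, and two diagonal
matrices with the same multiplicities differ by a permutation matrix. Every tuple `(mᵢ)` with
`∑ mᵢ = n` occurs, so the count is a sum over such tuples of orbit sizes. By orbit–stabilizer each
orbit has `|GLₙ(F)| / |C|` elements, where, the `αᵢ` being distinct, the centralizer `C` of the
diagonal matrix consists of the block-diagonal matrices with blocks on the eigenspaces, so that
`C ≅ ∏ᵢ GL_{mᵢ}(F)`.
-/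

open Matrix MulAction

theorem Nat.card_subtype_eq_sum_card_fiberwise {α β : Type*} [Finite α] [DecidableEq β]
    {p : α → Prop} {f : α → β} {t : Finset β} (h : ∀ a, p a → f a ∈ t) :
    Nat.card {a // p a} = ∑ b ∈ t, Nat.card {a // p a ∧ f a = b} := by
  classical
  have := Fintype.ofFinite α
  simp only [Nat.card_eq_fintype_card, Fintype.card_subtype, ← Finset.filter_filter]
  exact Finset.card_eq_sum_card_fiberwise fun a ha => h a (Finset.mem_filter.mp ha).2

section Fibers

variable {ι κ : Type*} [Fintype ι] [Fintype κ] [DecidableEq κ]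

theorem sum_card_fiber (d : ι → κ) : ∑ i, Fintype.card {j // d j = i} = Fintype.card ι := by
  rw [← Fintype.card_sigma, Fintype.card_congr (Equiv.sigmaFiberEquiv d)]

theorem exists_card_fiber_eq (m : κ → ℕ) (hm : ∑ i, m i = Fintype.card ι) :
    ∃ d : ι → κ, ∀ i, Fintype.card {j // d j = i} = m i := by
  let e : ι ≃ Σ i, Fin (m i) := Fintype.equivOfCardEq (by simp [hm])
  refine ⟨fun j => (e j).1, fun i => ?_⟩
  rw [Fintype.card_congr ((e.subtypeEquiv fun _ => Iff.rfl).trans (Equiv.sigmaSubtype i)),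
    Fintype.card_fin]

end Fibers

section ConjAct

variable {M : Type*} [Monoid M]

theorem exists_conj_eq_iff_mem_orbit {A B : M} :
    (∃ P : Mˣ, A = P * B * ↑P⁻¹) ↔ A ∈ orbit (ConjAct Mˣ) B := by
  refine ⟨fun ⟨P, hP⟩ => ⟨ConjAct.toConjAct P, hP.symm⟩, fun ⟨g, hg⟩ => ⟨ConjAct.ofConjAct g, ?_⟩⟩
  rw [← hg]
  rfl

theorem toConjAct_mem_stabilizer_iff {u : Mˣ} {a : M} :
    ConjAct.toConjAct u ∈ stabilizer (ConjAct Mˣ) a ↔ Commute (u : M) a := by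
  rw [mem_stabilizer_iff, ConjAct.units_smul_def, ConjAct.ofConjAct_toConjAct,
    Units.mul_inv_eq_iff_eq_mul]
  rfl

theorem card_stabilizer_conjAct_of_centralizer_eq_range {N : Type*} [Monoid N] {f : N →* M}
    (hf : Function.Injective f) {a : M} (hrange : ∀ x, Commute x a ↔ x ∈ Set.range f) :
    Nat.card (stabilizer (ConjAct Mˣ) a) = Nat.card Nˣ := by
  let φ : Nˣ →* ConjAct Mˣ := ConjAct.toConjAct.toMonoidHom.comp (Units.map f)
  have hφ : Function.Injective φ := ConjAct.toConjAct.injective.comp (Units.map_injective hf)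
  suffices stabilizer (ConjAct Mˣ) a = φ.range by
    rw [this]; exact (Nat.card_congr (MonoidHom.ofInjective hφ).toEquiv).symm
  ext g
  obtain ⟨u, rfl⟩ := ConjAct.toConjAct.surjective g
  rw [toConjAct_mem_stabilizer_iff, MonoidHom.mem_range]
  constructor
  · intro hu
    obtain ⟨x, hx⟩ := (hrange _).mp hu
    obtain ⟨y, hy⟩ := (hrange _).mp hu.units_inv_left
    have hxy : x * y = 1 := hf (by rw [map_mul, hx, hy, Units.mul_inv, map_one])
    have hyx : y * x = 1 := hf (by rw [map_mul, hx, hy, Units.inv_mul, map_one])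
    exact ⟨⟨x, y, hxy, hyx⟩, congrArg ConjAct.toConjAct (Units.ext hx)⟩
  · rintro ⟨x, hx⟩
    rw [← ConjAct.toConjAct.injective hx]
    exact (hrange _).mpr ⟨x, rfl⟩

end ConjAct

theorem card_units_matrix_congr {R ι ι' : Type*} [CommRing R] [Fintype ι] [DecidableEq ι]
    [Fintype ι'] [DecidableEq ι'] (e : ι ≃ ι') :
    Nat.card (Matrix ι ι R)ˣ = Nat.card (Matrix ι' ι' R)ˣ :=
  Nat.card_congr (Units.mapEquiv (reindexAlgEquiv R R e).toMulEquiv).toEquiv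

theorem commute_diagonal_iff {R ι : Type*} [CommRing R] [NoZeroDivisors R] [Fintype ι]
    [DecidableEq ι] {v : ι → R} {M : Matrix ι ι R} :
    Commute M (diagonal v) ↔ ∀ j j', v j ≠ v j' → M j j' = 0 := by
  simp only [Commute, SemiconjBy, ← Matrix.ext_iff, mul_diagonal, diagonal_mul]
  refine forall₂_congr fun j j' => ⟨fun h hne => ?_, fun h => ?_⟩
  · have : M j j' * (v j' - v j) = 0 := by rw [mul_sub, h, mul_comm]; exact sub_self _
    exact (mul_eq_zero.mp this).resolve_right (sub_ne_zero.mpr (Ne.symm hne))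
  · by_cases hv : v j = v j'
    · rw [hv, mul_comm]
    · rw [h hv, zero_mul, mul_zero]

section BlockDiagonal

variable {R : Type*} [CommRing R] {ι κ : Type*} [Fintype ι] [DecidableEq ι] [Fintype κ]
  [DecidableEq κ]

def blockDiagonalFiber (d : ι → κ) :
    (∀ i, Matrix {j // d j = i} {j // d j = i} R) →+* Matrix ι ι R :=
  (reindexAlgEquiv R R (Equiv.sigmaFiberEquiv d)).toRingEquiv.toRingHom.comp
    (blockDiagonal'RingHom (fun i => {j // d j = i}) R)

theorem blockDiagonalFiber_apply_val (d : ι → κ)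
    (B : ∀ i, Matrix {j // d j = i} {j // d j = i} R) {i : κ} (a b : {j // d j = i}) :
    blockDiagonalFiber d B a b = B i a b := by
  let e := Equiv.sigmaFiberEquiv d
  have hsymm : ∀ c : {j // d j = i}, e.symm c = ⟨i, c⟩ := fun c => e.symm_apply_apply ⟨i, c⟩
  change blockDiagonal' B (e.symm a) (e.symm b) = _
  rw [hsymm, hsymm, blockDiagonal'_apply_eq]

theorem blockDiagonalFiber_apply_of_ne (d : ι → κ)
    (B : ∀ i, Matrix {j // d j = i} {j // d j = i} R) {j j' : ι} (h : d j ≠ d j') :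
    blockDiagonalFiber d B j j' = 0 :=
  blockDiagonal'_apply_ne B ⟨j, rfl⟩ ⟨j', rfl⟩ h

theorem blockDiagonalFiber_injective (d : ι → κ) :
    Function.Injective (blockDiagonalFiber (R := R) d) :=
  (reindexAlgEquiv R R (Equiv.sigmaFiberEquiv d)).injective.comp blockDiagonal'_injective

theorem mem_range_blockDiagonalFiber_iff {d : ι → κ} {M : Matrix ι ι R} :
    M ∈ Set.range (blockDiagonalFiber d) ↔ ∀ j j', d j ≠ d j' → M j j' = 0 := by
  constructor
  · rintro ⟨B, rfl⟩ j j' h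
    exact blockDiagonalFiber_apply_of_ne d B h
  · intro hM
    refine ⟨fun i => M.submatrix (↑) (↑), ?_⟩
    ext j j'
    by_cases h : d j = d j'
    · exact blockDiagonalFiber_apply_val d _ ⟨j, rfl⟩ ⟨j', h.symm⟩
    · rw [blockDiagonalFiber_apply_of_ne d _ h, hM j j' h]

end BlockDiagonal

section Diagonal

variable {R : Type*} [CommRing R] {ι κ : Type*} [Fintype ι] [DecidableEq ι] [Fintype κ]
  [DecidableEq κ] {α : κ → R}

theorem card_stabilizer_diagonal [NoZeroDivisors R] (hα : Function.Injective α) (d : ι → κ) :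
    Nat.card (stabilizer (ConjAct (Matrix ι ι R)ˣ) (diagonal fun j => α (d j))) =
      ∏ i, Nat.card (Matrix {j // d j = i} {j // d j = i} R)ˣ := by
  rw [card_stabilizer_conjAct_of_centralizer_eq_range
      (f := (blockDiagonalFiber d).toMonoidHom) (blockDiagonalFiber_injective d),
    Nat.card_congr MulEquiv.piUnits.toEquiv, Nat.card_pi]
  intro M
  rw [commute_diagonal_iff, RingHom.toMonoidHom_eq_coe, MonoidHom.coe_coe,
    mem_range_blockDiagonalFiber_iff]
  simp only [hα.ne_iff]

theorem card_orbit_diagonal [NoZeroDivisors R] [Finite R] (hα : Function.Injective α)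
    (d : ι → κ) :
    Nat.card (orbit (ConjAct (Matrix ι ι R)ˣ) (diagonal fun j => α (d j))) =
      Nat.card (Matrix ι ι R)ˣ / ∏ i, Nat.card (Matrix {j // d j = i} {j // d j = i} R)ˣ := by
  have h := Nat.card_congr
    (orbitProdStabilizerEquivGroup (ConjAct (Matrix ι ι R)ˣ) (diagonal fun j => α (d j)))
  rw [Nat.card_prod, card_stabilizer_diagonal hα d,
    Nat.card_congr ConjAct.ofConjAct.toEquiv] at h
  exact (Nat.div_eq_of_eq_mul_left (Finset.prod_pos fun i _ => Nat.card_pos) h.symm).symm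

theorem diagonal_comp_perm_mem_orbit (v : ι → R) (σ : Equiv.Perm ι) :
    diagonal (v ∘ σ) ∈ orbit (ConjAct (Matrix ι ι R)ˣ) (diagonal v) := by
  refine ⟨ConjAct.toConjAct ((permMatrixHom (R := R)).toHomUnits σ⁻¹), ?_⟩
  change _ • _ = _
  rw [ConjAct.units_smul_def, ConjAct.ofConjAct_toConjAct, ← map_inv,
    MonoidHom.coe_toHomUnits, MonoidHom.coe_toHomUnits, permMatrixHom_apply, permMatrixHom_apply,
    inv_inv, PEquiv.toMatrix_toPEquiv_mul, PEquiv.mul_toMatrix_toPEquiv, submatrix_submatrix,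
    Function.id_comp, Function.comp_id, Equiv.Perm.inv_def, Equiv.symm_symm,
    submatrix_diagonal_equiv]

end Diagonal

section Field

variable {F : Type*} [Field F] {ι κ : Type*} [Fintype ι] [DecidableEq ι] [DecidableEq κ]
  {α : κ → F}

/-- By rank–nullity, the dimension of the `c`-eigenspace of `A`; the subtraction does not
truncate since `rank ≤ card ι`. -/
noncomputable def eigenspaceDim (A : Matrix ι ι F) (c : F) : ℕ := Fintype.card ι - (A - c • 1).rank

theorem eigenspaceDim_smul (g : ConjAct (Matrix ι ι F)ˣ) (A : Matrix ι ι F) (c : F) :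
    eigenspaceDim (g • A) c = eigenspaceDim A c := by
  have hsub : g • A - c • 1 = g • (A - c • 1) := by rw [smul_sub, smul_comm, smul_one]
  rw [eigenspaceDim, eigenspaceDim, hsub, ConjAct.units_smul_def,
    rank_mul_eq_left_of_isUnit_det _ _ ((isUnit_iff_isUnit_det _).mp (Units.isUnit _)),
    rank_mul_eq_right_of_isUnit_det _ _ ((isUnit_iff_isUnit_det _).mp (Units.isUnit _))]

theorem eigenspaceDim_diagonal (hα : Function.Injective α) (d : ι → κ) (i : κ) :
    eigenspaceDim (diagonal fun j => α (d j)) (α i) = Fintype.card {j // d j = i} := by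
  classical
  have hne : ∀ j, α (d j) - α i ≠ 0 ↔ ¬d j = i := fun j => sub_ne_zero.trans hα.ne_iff
  rw [eigenspaceDim, smul_one_eq_diagonal, diagonal_sub, rank_diagonal,
    Fintype.card_congr (Equiv.subtypeEquivRight hne), Fintype.card_subtype_compl,
    Nat.sub_sub_self (Fintype.card_subtype_le _)]

theorem eigenspaceDim_of_mem_orbit (hα : Function.Injective α) (d : ι → κ) {A : Matrix ι ι F}
    (hA : A ∈ orbit (ConjAct (Matrix ι ι F)ˣ) (diagonal fun j => α (d j))) (i : κ) :
    eigenspaceDim A (α i) = Fintype.card {j // d j = i} := by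
  obtain ⟨g, rfl⟩ := hA
  rw [eigenspaceDim_smul, eigenspaceDim_diagonal hα]

theorem mem_orbit_diagonal_iff (hα : Function.Injective α) (d : ι → κ) {A : Matrix ι ι F} :
    A ∈ orbit (ConjAct (Matrix ι ι F)ˣ) (diagonal fun j => α (d j)) ↔
      (∃ d' : ι → κ, A ∈ orbit (ConjAct (Matrix ι ι F)ˣ) (diagonal fun j => α (d' j))) ∧
        ∀ i, eigenspaceDim A (α i) = Fintype.card {j // d j = i} := by
  refine ⟨fun hA => ⟨⟨d, hA⟩, eigenspaceDim_of_mem_orbit hα d hA⟩, ?_⟩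
  rintro ⟨⟨d', hA⟩, hdim⟩
  have hcard : ∀ i, Fintype.card {j // d' j = i} = Fintype.card {j // d j = i} := fun i =>
    (eigenspaceDim_of_mem_orbit hα d' hA i).symm.trans (hdim i)
  let σ : Equiv.Perm ι := Equiv.ofFiberEquiv fun i => Fintype.equivOfCardEq (hcard i)
  have hd' : (fun j => α (d' j)) = (fun j => α (d j)) ∘ σ :=
    funext fun j => by simp only [Function.comp, σ, Equiv.ofFiberEquiv_map]
  rw [hd', orbit_eq_iff.mpr (diagonal_comp_perm_mem_orbit _ σ)] at hA
  exact hA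

end Field

theorem card_diagonalizable_with_eigenspaceDim {F ι κ : Type*} [Field F] [Finite F] [Fintype ι]
    [DecidableEq ι] [Fintype κ] [DecidableEq κ] {α : κ → F} (hα : Function.Injective α)
    (m : κ → ℕ) (hm : ∑ i, m i = Fintype.card ι) :
    Nat.card {A : Matrix ι ι F //
        (∃ d : ι → κ, A ∈ orbit (ConjAct (Matrix ι ι F)ˣ) (diagonal fun j => α (d j))) ∧
          (fun i => eigenspaceDim A (α i)) = m} =
      Nat.card (Matrix ι ι F)ˣ / ∏ i, Nat.card (Matrix (Fin (m i)) (Fin (m i)) F)ˣ := by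
  obtain ⟨d, hd⟩ := exists_card_fiber_eq m hm
  have horbit : ∀ A : Matrix ι ι F,
      ((∃ d' : ι → κ, A ∈ orbit (ConjAct (Matrix ι ι F)ˣ) (diagonal fun j => α (d' j))) ∧
        (fun i => eigenspaceDim A (α i)) = m) ↔
      A ∈ orbit (ConjAct (Matrix ι ι F)ˣ) (diagonal fun j => α (d j)) := fun A => by
    simp only [funext_iff, mem_orbit_diagonal_iff hα d, hd]
  rw [Nat.card_congr (Equiv.subtypeEquivRight horbit), card_orbit_diagonal hα d]
  congr 1
  exact Finset.prod_congr rfl fun i _ => card_units_matrix_congr (Fintype.equivFinOfCardEq (hd i))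

theorem stmt_2_general (F : Type) [Field F] [Fintype F] (n k : ℕ)
    (α : Fin k → F) (hα : Function.Injective α) :
    Nat.card {A : Matrix (Fin n) (Fin n) F //
        ∃ (d : Fin n → Fin k) (P : (Matrix (Fin n) (Fin n) F)ˣ),
          A = (P : Matrix (Fin n) (Fin n) F) * Matrix.diagonal (fun j => α (d j)) *
              ((P⁻¹ : _) : Matrix (Fin n) (Fin n) F)} =
      ∑ m ∈ Finset.Nat.antidiagonalTuple k n,
        Nat.card (Matrix (Fin n) (Fin n) F)ˣ /
          ∏ i : Fin k, Nat.card (Matrix (Fin (m i)) (Fin (m i)) F)ˣ := by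
  simp only [exists_conj_eq_iff_mem_orbit]
  rw [Nat.card_subtype_eq_sum_card_fiberwise (f := fun A i => eigenspaceDim A (α i))
    (t := Finset.Nat.antidiagonalTuple k n)]
  · refine Finset.sum_congr rfl fun m hm => card_diagonalizable_with_eigenspaceDim hα m ?_
    rw [Fintype.card_fin]
    exact Finset.Nat.mem_antidiagonalTuple.mp hm
  · rintro A ⟨d, hA⟩
    rw [Finset.Nat.mem_antidiagonalTuple]
    simp only [eigenspaceDim_of_mem_orbit hα d hA, sum_card_fiber, Fintype.card_fin]

/-- The number of `n × n` matrices over a finite field that are diagonalizable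
with all eigenvalues among the pairwise distinct `α₁, …, α_k` equals
`∑_{n₁+⋯+n_k = n, nᵢ ≥ 0} |GLₙ(F)| / ∏ᵢ |GL_{nᵢ}(F)|`. -/
theorem stmt_2 (F : Type) [Field F] [Fintype F] [DecidableEq F] (n k : ℕ) (hn : 1 ≤ n)
    (α : Fin k → F) (hα : Function.Injective α) :
    Nat.card {A : Matrix (Fin n) (Fin n) F //
        ∃ (d : Fin n → Fin k) (P : (Matrix (Fin n) (Fin n) F)ˣ),
          A = (P : Matrix (Fin n) (Fin n) F) * Matrix.diagonal (fun j => α (d j)) *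
              ((P⁻¹ : _) : Matrix (Fin n) (Fin n) F)} =
      ∑ m ∈ Finset.Nat.antidiagonalTuple k n,
        Nat.card (Matrix (Fin n) (Fin n) F)ˣ /
          ∏ i : Fin k, Nat.card (Matrix (Fin (m i)) (Fin (m i)) F)ˣ :=
  stmt_2_general F n k α hα
end

section
/- Let q ≥ 2 be a real number (or an integer), and let n₁,...,n_s be positive integers with n₁ + ... + n_s = n. Then |GLₙ(F_q)| / (|GL_{n₁}(F_q)|·...·|GL_{n_s}(F_q)|) ≤ q^{2·Σ_{i<j} n_i n_j + Σ_{i=2}^{s} n_i}, where |GL_m(F_q)| = q^{m(m−1)/2}·(q−1)(q²−1)···(q^m −1). -/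
/-!
Write `|GL_t(𝔽_q)| = ∏_{j<t} q^j (q^{j+1} - 1)`; for `q ≥ 2` each factor lies between `q^{2j}` and
`q^{2j+1}`. Peeling off the factors with `n₁ ≤ j < n` gives `|GL_n| ≤ |GL_{n₁}| q^{n² - n₁²}`, while
`|GL_{nᵢ}| ≥ q^{nᵢ(nᵢ-1)}`. The exponents match because `n² = ∑ nᵢ² + 2 ∑_{i<j} nᵢ nⱼ`.
-/

open Finset

def glCard (q t : ℕ) : ℕ := q ^ (t * (t - 1) / 2) * ∏ j ∈ range t, (q ^ (j + 1) - 1)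

lemma mul_pred_add_self (t : ℕ) : t * (t - 1) + t = t ^ 2 := by
  cases t with
  | zero => rfl
  | succ t => rw [Nat.add_sub_cancel]; ring

lemma glCard_succ (q t : ℕ) :
    glCard q (t + 1) = glCard q t * (q ^ t * (q ^ (t + 1) - 1)) := by
  have hexp : (t + 1) * t / 2 = t * (t - 1) / 2 + t := by
    have h := sum_range_id (t + 1)
    rw [sum_range_succ, sum_range_id, Nat.add_sub_cancel] at h
    exact h.symm
  simp only [glCard, prod_range_succ, Nat.add_sub_cancel, hexp, pow_add]
  ring

lemma pow_two_mul_le_glCard_factor {q : ℕ} (hq : 2 ≤ q) (t : ℕ) :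
    q ^ (2 * t) ≤ q ^ t * (q ^ (t + 1) - 1) := by
  have hpos : 1 ≤ q ^ t := Nat.one_le_pow _ _ (by omega)
  have hstep : 2 * q ^ t ≤ q ^ (t + 1) := by
    rw [pow_succ']; exact Nat.mul_le_mul_right _ hq
  rw [two_mul, pow_add]
  exact Nat.mul_le_mul_left _ (by omega)

lemma glCard_factor_le_pow (q t : ℕ) : q ^ t * (q ^ (t + 1) - 1) ≤ q ^ (2 * t + 1) := by
  calc q ^ t * (q ^ (t + 1) - 1) ≤ q ^ t * q ^ (t + 1) := Nat.mul_le_mul_left _ (Nat.sub_le _ _)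
    _ = q ^ (2 * t + 1) := by rw [← pow_add]; ring_nf

lemma pow_le_glCard {q : ℕ} (hq : 2 ≤ q) (t : ℕ) : q ^ (t * (t - 1)) ≤ glCard q t := by
  induction t with
  | zero => simp [glCard]
  | succ t ih =>
    have hexp : (t + 1) * (t + 1 - 1) = t * (t - 1) + 2 * t := by
      rw [Nat.add_sub_cancel]
      linarith [mul_pred_add_self t]
    rw [glCard_succ, hexp, pow_add]
    exact Nat.mul_le_mul ih (pow_two_mul_le_glCard_factor hq t)

lemma glCard_le_mul_pow (q : ℕ) {a n : ℕ} (h : a ≤ n) :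
    glCard q n ≤ glCard q a * q ^ (n ^ 2 - a ^ 2) := by
  induction n, h using Nat.le_induction with
  | base => simp
  | succ n han ih =>
    have hexp : (n + 1) ^ 2 - a ^ 2 = n ^ 2 - a ^ 2 + (2 * n + 1) := by
      have : a ^ 2 ≤ n ^ 2 := Nat.pow_le_pow_left han 2
      rw [add_sq]; omega
    calc glCard q (n + 1) ≤ glCard q n * q ^ (2 * n + 1) := by
          rw [glCard_succ]; exact Nat.mul_le_mul_left _ (glCard_factor_le_pow q n)
      _ ≤ glCard q a * q ^ (n ^ 2 - a ^ 2) * q ^ (2 * n + 1) := Nat.mul_le_mul_right _ ih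
      _ = glCard q a * q ^ ((n + 1) ^ 2 - a ^ 2) := by
          rw [hexp, pow_add q (n ^ 2 - a ^ 2), mul_assoc]

theorem Fintype.sq_sum_eq_sum_sq_add_two_mul_sum_lt {ι R : Type*} [Fintype ι] [LinearOrder ι]
    [CommSemiring R] (f : ι → R) :
    (∑ i, f i) ^ 2 =
      ∑ i, f i ^ 2 + 2 * ∑ p ∈ univ.filter (fun p : ι × ι => p.1 < p.2), f p.1 * f p.2 := by
  have hsplit : ∀ p : ι × ι, f p.1 * f p.2 =
      (if p.1 < p.2 then f p.1 * f p.2 else 0) + (if p.2 < p.1 then f p.1 * f p.2 else 0) +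
        (if p.1 = p.2 then f p.1 * f p.2 else 0) := by
    intro p
    rcases lt_trichotomy p.1 p.2 with h | h | h
    · simp [h, h.not_gt, h.ne]
    · simp [h]
    · simp [h, h.not_gt, h.ne']
  have hswap : ∑ p : ι × ι, (if p.2 < p.1 then f p.1 * f p.2 else 0) =
      ∑ p : ι × ι, (if p.1 < p.2 then f p.1 * f p.2 else 0) :=
    Fintype.sum_equiv (Equiv.prodComm ι ι) _ _ fun p => by simp [mul_comm]
  have hdiag : ∑ p : ι × ι, (if p.1 = p.2 then f p.1 * f p.2 else 0) = ∑ i, f i ^ 2 := by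
    simp [Fintype.sum_prod_type, sq]
  rw [sq, Fintype.sum_mul_sum, ← Fintype.sum_prod_type', Fintype.sum_congr _ _ hsplit,
    sum_add_distrib, sum_add_distrib, hswap, hdiag, sum_filter]
  ring

lemma glCard_sum_le {ι : Type*} [Fintype ι] [LinearOrder ι] {q : ℕ} (hq : 2 ≤ q)
    (m : ι → ℕ) (z : ι) :
    glCard q (∑ i, m i) ≤ (∏ i, glCard q (m i)) *
      q ^ (2 * ∑ p ∈ univ.filter (fun p : ι × ι => p.1 < p.2), m p.1 * m p.2 +
        ∑ i ∈ univ.erase z, m i) := by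
  set S := ∑ p ∈ univ.filter (fun p : ι × ι => p.1 < p.2), m p.1 * m p.2
  have hexp : (∑ i, m i) ^ 2 - m z ^ 2 =
      ∑ i ∈ univ.erase z, m i * (m i - 1) + (2 * S + ∑ i ∈ univ.erase z, m i) := by
    rw [Fintype.sq_sum_eq_sum_sq_add_two_mul_sum_lt, ← add_sum_erase _ _ (mem_univ z),
      sum_congr rfl fun i _ => (mul_pred_add_self (m i)).symm, sum_add_distrib]
    omega
  rw [← mul_prod_erase _ _ (mem_univ z)]
  calc glCard q (∑ i, m i) ≤ glCard q (m z) * q ^ ((∑ i, m i) ^ 2 - m z ^ 2) :=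
        glCard_le_mul_pow q (single_le_sum (fun i _ => Nat.zero_le (m i)) (mem_univ z))
    _ = glCard q (m z) * (∏ i ∈ univ.erase z, q ^ (m i * (m i - 1))) *
          q ^ (2 * S + ∑ i ∈ univ.erase z, m i) := by
        rw [hexp, pow_add, prod_pow_eq_pow_sum, mul_assoc]
    _ ≤ glCard q (m z) * (∏ i ∈ univ.erase z, glCard q (m i)) *
          q ^ (2 * S + ∑ i ∈ univ.erase z, m i) := by
        gcongr with i
        exact pow_le_glCard hq (m i)

theorem stmt_12_general (q : ℕ) (hq : 2 ≤ q) (s n : ℕ) (hs : 1 ≤ s)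
    (m : Fin s → ℕ) (hsum : (∑ i, m i) = n)
    (G : ℕ → ℕ)
    (hG : ∀ t, G t = q ^ (t * (t - 1) / 2) * ∏ j ∈ Finset.range t, (q ^ (j + 1) - 1)) :
    G n ≤ (∏ i, G (m i)) *
        q ^ (2 * (∑ p ∈ Finset.univ.filter (fun p : Fin s × Fin s => p.1 < p.2),
              m p.1 * m p.2) +
          ∑ i ∈ Finset.univ.filter (fun i : Fin s => (i : ℕ) ≠ 0), m i) := by
  obtain rfl : G = glCard q := funext hG
  have hnonzero : univ.filter (fun i : Fin s => (i : ℕ) ≠ 0) = univ.erase ⟨0, hs⟩ := by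
    ext i
    simp [Fin.ext_iff]
  rw [← hsum, hnonzero]
  exact glCard_sum_le hq m ⟨0, hs⟩

/-- With `G t = |GL_t(F_q)| = q^{t(t-1)/2} (q-1)(q²-1)⋯(q^t-1)`, for positive integers
`n₁ + ⋯ + n_s = n` one has `G n ≤ (∏ᵢ G nᵢ) · q^{2∑_{i<j} nᵢnⱼ + ∑_{i≥2} nᵢ}`,
i.e. the quotient `G n / ∏ᵢ G nᵢ` is bounded by that power of `q`. -/
theorem stmt_12 (q : ℕ) (hq : 2 ≤ q) (s n : ℕ) (hs : 1 ≤ s)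
    (m : Fin s → ℕ) (hm : ∀ i, 1 ≤ m i) (hsum : (∑ i, m i) = n)
    (G : ℕ → ℕ)
    (hG : ∀ t, G t = q ^ (t * (t - 1) / 2) * ∏ j ∈ Finset.range t, (q ^ (j + 1) - 1)) :
    G n ≤ (∏ i, G (m i)) *
        q ^ (2 * (∑ p ∈ Finset.univ.filter (fun p : Fin s × Fin s => p.1 < p.2),
              m p.1 * m p.2) +
          ∑ i ∈ Finset.univ.filter (fun i : Fin s => (i : ℕ) ≠ 0), m i) :=
  stmt_12_general q hq s n hs m hsum G hG
end

section
/- Let R be a finite ring and let p₁,...,p_n be the distinct primes dividing |R|, and k ≥ 1. Then the number of (k+1)-potent elements of R satisfies |{x ∈ R : x^{k+1} = x}| ≤ ((k+1)^n / (p₁·p₂·…·p_n)) · |R|^{2k/(k+1)}. -/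
/-!
Writing `T(R)` for the number of `(k+1)`-potents, we prove the stronger bound
`(∏ p) * T(R) ≤ (k+1)^n * |R|`; the theorem follows because `|R| ≤ |R|^(2k/(k+1))`
for `k ≥ 1`.

Both sides are multiplicative along the splitting of `R` into rings of coprime orders (by the
central idempotents that Bézout's identity provides), so it suffices to show
`p * T(R) ≤ (k+1) * |R|` when `|R|` is a power of `p`. The ratio `T(R) / |R|` cannot decrease
when passing to a quotient ring `S`, since every fibre of `R → S` has `|R| / |S|` elements, so we
may pass to a simple quotient. In a finite simple ring the centre is a field `F`, of order
`q ≥ p`, and `Fˣ` acts freely on `R \ {0}`; if `y` and `u * y` are both nonzero `(k+1)`-potents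
then `u^k = 1`, so each orbit holds at most `k` of them. Hence `(q-1)(T-1) ≤ k(|R|-1)`, which
gives `q * T ≤ (k+1) * |R|`.
-/

open Finset

universe u

lemma card_potent_congr {M N : Type*} [Monoid M] [Monoid N] (e : M ≃* N) (m : ℕ) :
    Nat.card {x : M // x ^ m = x} = Nat.card {y : N // y ^ m = y} :=
  Nat.card_congr <| e.toEquiv.subtypeEquiv fun x => by
    simp only [MulEquiv.toEquiv_eq_coe, MulEquiv.coe_toEquiv, ← map_pow, e.injective.eq_iff]

lemma card_potent_prod (M N : Type*) [Monoid M] [Monoid N] (m : ℕ) :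
    Nat.card {x : M × N // x ^ m = x} =
      Nat.card {a : M // a ^ m = a} * Nat.card {b : N // b ^ m = b} := by
  rw [← Nat.card_prod]
  refine Nat.card_congr <| (Equiv.subtypeEquivRight fun x => ?_).trans Equiv.subtypeProdEquivProd
  simp only [Prod.ext_iff, Prod.pow_fst, Prod.pow_snd]

section Surjective

variable {R S : Type*} [Ring R] [Ring S] [Finite R]

lemma card_potent_le_mul_card_ker (f : R →+* S) (hf : Function.Surjective f) (m : ℕ) :
    Nat.card {x : R // x ^ m = x} ≤
      Nat.card {y : S // y ^ m = y} * Nat.card f.toAddMonoidHom.ker := by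
  have := Finite.of_surjective f hf
  rw [← Nat.card_prod]
  let g := Function.surjInv hf
  refine Nat.card_le_card_of_injective
    (fun x => (⟨f x, by rw [← map_pow, x.2]⟩, ⟨x - g (f x), ?_⟩)) fun x y hxy => ?_
  · simp [AddMonoidHom.mem_ker, g, Function.surjInv_eq hf]
  · have hfxy : f x = f y := congrArg (fun p => (p.1 : S)) hxy
    have hsub : (x : R) - g (f x) = y - g (f y) := congrArg (fun p => (p.2 : R)) hxy
    rw [hfxy] at hsub
    exact Subtype.ext (sub_left_injective hsub)

lemma card_mul_card_potent_le_of_surjective (f : R →+* S) (hf : Function.Surjective f) (m : ℕ) :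
    Nat.card S * Nat.card {x : R // x ^ m = x} ≤ Nat.card {y : S // y ^ m = y} * Nat.card R := by
  have hcard : Nat.card R = Nat.card S * Nat.card f.toAddMonoidHom.ker := by
    rw [← f.toAddMonoidHom.ker.card_mul_index, AddSubgroup.index_ker,
      AddMonoidHom.range_eq_top.mpr hf, AddSubgroup.card_top, mul_comm]
  rw [hcard, mul_left_comm]
  exact Nat.mul_le_mul_left _ (card_potent_le_mul_card_ker f hf m)

end Surjective

namespace IsSimpleRing

variable {R : Type*} [Ring R] [IsSimpleRing R]

lemma isUnit_of_mem_center {z : R} (hz : z ∈ Subring.center R) (h0 : z ≠ 0) : IsUnit z := by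
  obtain ⟨t, ht⟩ := (isField_center R).mul_inv_cancel (a := ⟨z, hz⟩) (by simpa using h0)
  have hzt : z * t = 1 := congrArg Subtype.val ht
  exact ⟨⟨z, t, hzt, (Subring.mem_center_iff.mp t.2 z).symm.trans hzt⟩, rfl⟩

lemma pow_eq_pow_of_mul_eq_mul {k : ℕ} (u v : (Subring.center R)ˣ) {x y : R} (hx0 : x ≠ 0)
    (hx : x ^ (k + 1) = x) (hy : y ^ (k + 1) = y) (h : (u * x : R) = v * y) : u ^ k = v ^ k := by
  have hu : ∀ r : R, Commute (u : R) r := fun r =>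
    (Subring.mem_center_iff.mp (u : Subring.center R).2 r).symm
  have hv : ∀ r : R, Commute (v : R) r := fun r =>
    (Subring.mem_center_iff.mp (v : Subring.center R).2 r).symm
  have hker : ((u ^ (k + 1) - v ^ k * u : Subring.center R) : R) * x = 0 := by
    push_cast
    rw [sub_mul, mul_assoc, h, ← hx, ← (hu x).mul_pow, h, (hv y).mul_pow, hy, ← mul_assoc,
      ← pow_succ, sub_self]
  have hc : u ^ (k + 1) - v ^ k * u = (0 : Subring.center R) := by
    by_contra hc
    exact hx0 ((isUnit_of_mem_center (u ^ (k + 1) - v ^ k * u : Subring.center R).2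
      (by rwa [Ne, ZeroMemClass.coe_eq_zero])).mul_right_eq_zero.mp hker)
  rw [sub_eq_zero, pow_succ] at hc
  exact Units.ext (by simpa using u.isUnit.mul_left_inj.mp hc)

lemma card_units_center_mul_card_potent_sub_one_le [Finite R] {k : ℕ} (hk : 0 < k) :
    Nat.card (Subring.center R)ˣ * (Nat.card {x : R // x ^ (k + 1) = x} - 1) ≤
      k * (Nat.card R - 1) := by
  classical
  have := Fintype.ofFinite R
  have := Fintype.ofFinite (Subring.center R)ˣ
  have := (isField_center R).isDomain
  have : NeZero k := ⟨hk.ne'⟩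
  set P : Finset R := {x | x ^ (k + 1) = x}
  have h0P : (0 : R) ∈ P := by simp [P, zero_pow (Nat.succ_ne_zero k)]
  rw [Nat.card_eq_fintype_card, Nat.card_eq_fintype_card, Nat.card_eq_fintype_card,
    Fintype.card_subtype, ← card_erase_of_mem h0P, ← card_univ (α := R),
    ← card_erase_of_mem (mem_univ 0), ← card_univ, ← card_product]
  refine card_le_mul_card_image_of_maps_to (f := fun a => (a.1 : R) * a.2)
    (s := (univ : Finset (Subring.center R)ˣ) ×ˢ P.erase 0) (fun a ha => ?_) k fun b _ => ?_
  · simp only [mem_product, P, mem_erase, mem_filter, mem_univ, true_and, and_true] at ha ⊢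
    exact ((Units.isUnit a.1).map (Subring.center R).subtype).mul_right_eq_zero.not.mpr ha.1
  -- the fibre through `(u₀, x₀)` embeds into the `k`-th roots of unity by `(u, x) ↦ u * u₀⁻¹`
  by_contra! hlt
  obtain ⟨a₀, ha₀⟩ := card_pos.mp ((Nat.zero_le k).trans_lt hlt)
  refine hlt.not_ge ?_
  simp only [mem_filter, mem_product, mem_univ, true_and, P, mem_erase] at ha₀
  have hmem : ∀ a ∈ ({a ∈ univ ×ˢ P.erase 0 | (a.1 : R) * a.2 = b} :
      Finset ((Subring.center R)ˣ × R)),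
      (a.2 ^ (k + 1) = a.2 ∧ a.2 ≠ 0) ∧ (a.1 : R) * a.2 = b := by
    intro a ha
    simp only [mem_filter, mem_product, mem_univ, true_and, P, mem_erase] at ha
    exact ⟨⟨ha.1.2, ha.1.1⟩, ha.2⟩
  rw [← Nat.card_eq_finsetCard]
  refine (Nat.card_le_card_of_injective (β := rootsOfUnity k (Subring.center R))
    (fun a => ⟨a.1.1 * a₀.1⁻¹, ?_⟩) fun a a' h => ?_).trans (card_rootsOfUnity _ _)
  · obtain ⟨⟨hpot, hne⟩, hb⟩ := hmem a.1 a.2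
    rw [mem_rootsOfUnity, mul_pow, pow_eq_pow_of_mul_eq_mul a.1.1 a₀.1 hne hpot ha₀.1.2
      (hb.trans ha₀.2.symm), inv_pow, mul_inv_cancel]
  · have h1 : a.1.1 = a'.1.1 := mul_right_cancel (congrArg Subtype.val h)
    have h2 : a.1.2 = a'.1.2 :=
      ((Units.isUnit a.1.1).map (Subring.center R).subtype).mul_left_cancel
        ((hmem a.1 a.2).2.trans (h1 ▸ (hmem a'.1 a'.2).2).symm)
    exact Subtype.ext (Prod.ext h1 h2)

theorem card_center_mul_card_potent_le [Finite R] {k : ℕ} (hk : 0 < k) :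
    Nat.card (Subring.center R) * Nat.card {x : R // x ^ (k + 1) = x} ≤ (k + 1) * Nat.card R := by
  have hTN := Finite.card_subtype_le fun x : R => x ^ (k + 1) = x
  by_cases hqk : Nat.card (Subring.center R) ≤ k + 1
  · exact Nat.mul_le_mul hqk hTN
  let := (isField_center R).toField
  have hq := Nat.card_eq_card_units_add_one (Subring.center R)
  have hqN : Nat.card (Subring.center R) ≤ Nat.card R := Finite.card_subtype_le _
  have hT : 0 < Nat.card {x : R // x ^ (k + 1) = x} :=
    Nat.card_pos_iff.mpr ⟨⟨⟨0, zero_pow (Nat.succ_ne_zero k)⟩⟩, inferInstance⟩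
  have hcount := card_units_center_mul_card_potent_sub_one_le (R := R) hk
  set q := Nat.card (Subring.center R)
  set T := Nat.card {x : R // x ^ (k + 1) = x}
  set N := Nat.card R
  have hq1 : 1 ≤ q := by omega
  rw [show Nat.card (Subring.center R)ˣ = q - 1 by omega] at hcount
  replace hqk := not_le.mp hqk
  zify [hT, hq1, hq1.trans hqN] at hcount ⊢
  -- `(q - 1)((k + 1)N - qT) = q(k(N - 1) - (q - 1)(T - 1)) + (N - q)(q - k - 1)`
  nlinarith [mul_nonneg (sub_nonneg.mpr (show (q : ℤ) ≤ N by exact_mod_cast hqN))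
    (sub_nonneg.mpr (show (k : ℤ) + 1 ≤ q by exact_mod_cast hqk.le))]

end IsSimpleRing

theorem exists_surjective_not_injective_of_not_isSimpleRing {R : Type u} [Ring R] [Nontrivial R]
    (hs : ¬ IsSimpleRing R) : ∃ (S : Type u) (_ : Ring S) (_ : Nontrivial S) (f : R →+* S),
      Function.Surjective f ∧ ¬ Function.Injective f := by
  obtain ⟨I, hbot, htop⟩ : ∃ I : TwoSidedIdeal R, I ≠ ⊥ ∧ I ≠ ⊤ := by
    by_contra! h
    exact hs (.of_eq_bot_or_eq_top fun I => or_iff_not_imp_left.mpr (h I))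
  let f := I.ringCon.mk'
  have : Nontrivial I.ringCon.Quotient := nontrivial_of_ne (f 1) (f 0) fun h => htop <|
    I.one_mem_iff.mp <| by
      rwa [← TwoSidedIdeal.ker_ringCon_mk' I, TwoSidedIdeal.mem_ker, ← map_zero f]
  refine ⟨_, _, this, f, I.ringCon.mk'_surjective, ?_⟩
  rwa [← TwoSidedIdeal.ker_eq_bot, TwoSidedIdeal.ker_ringCon_mk']

theorem exists_one_lt_dvd_card_mul_card_potent_le (R : Type u) [Ring R] [Finite R]
    [Nontrivial R] {k : ℕ} (hk : 0 < k) : ∃ q, 1 < q ∧ q ∣ Nat.card R ∧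
      q * Nat.card {x : R // x ^ (k + 1) = x} ≤ (k + 1) * Nat.card R := by
  induction h : Nat.card R using Nat.strong_induction_on generalizing R with
  | _ n ih =>
  subst h
  by_cases hs : IsSimpleRing R
  · have : Nontrivial (Subring.center R) := (IsSimpleRing.isField_center R).nontrivial
    exact ⟨Nat.card (Subring.center R), Finite.one_lt_card,
      AddSubgroup.card_addSubgroup_dvd_card (Subring.center R).toAddSubgroup,
      IsSimpleRing.card_center_mul_card_potent_le hk⟩
  obtain ⟨S, _, _, f, hf, hf_inj⟩ := exists_surjective_not_injective_of_not_isSimpleRing hs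
  have : Finite S := Finite.of_surjective f hf
  have hlt : Nat.card S < Nat.card R := by
    have := Fintype.ofFinite R
    have := Fintype.ofFinite S
    simpa only [Nat.card_eq_fintype_card] using
      Fintype.card_lt_of_surjective_not_injective f hf hf_inj
  obtain ⟨q, hq1, hqS, hqT⟩ := ih _ hlt S rfl
  refine ⟨q, hq1, hqS.trans (AddSubgroup.card_dvd_of_surjective f.toAddMonoidHom hf), ?_⟩
  have hRS := card_mul_card_potent_le_of_surjective f hf (k + 1)
  have hS : Nat.card S * (q * Nat.card {x : R // x ^ (k + 1) = x}) ≤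
      Nat.card S * ((k + 1) * Nat.card R) := by
    nlinarith [Nat.mul_le_mul_left q hRS, Nat.mul_le_mul_right (Nat.card R) hqT]
  exact Nat.le_of_mul_le_mul_left hS Nat.card_pos

lemma Nat.Coprime.coprime_card_of_forall_nsmul_eq_zero {G : Type*} [AddGroup G] [Finite G]
    {a b : ℕ} (hab : a.Coprime b) (h : ∀ x : G, a • x = 0) : (Nat.card G).Coprime b := by
  refine Nat.coprime_of_dvd fun p hp hpG hpb => ?_
  have := Fact.mk hp
  obtain ⟨x, hx⟩ := exists_prime_addOrderOf_dvd_card' p hpG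
  exact hp.ne_one <|
    Nat.eq_one_of_dvd_coprimes hab (hx ▸ addOrderOf_dvd_of_nsmul_eq_zero (h x)) hpb

lemma Nat.eq_of_mul_eq_mul_of_coprime {a b c d : ℕ} (h : c * d = a * b) (hcb : c.Coprime b)
    (hda : d.Coprime a) : c = a :=
  Nat.dvd_antisymm (hcb.dvd_of_dvd_mul_right (h ▸ dvd_mul_right c d))
    (hda.symm.dvd_of_dvd_mul_right (h ▸ dvd_mul_right a b))

lemma IsIdempotentElem.nsmul_corner_eq_zero {R : Type*} [Ring R] {e : R}
    (he : IsIdempotentElem e) {n : ℕ} (hn : n • e = 0) (x : he.Corner) : n • x = 0 := by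
  obtain ⟨hx, -⟩ := (Subsemigroup.mem_corner_iff he).mp x.2
  apply Subtype.ext
  change n • x.1 = 0
  rw [← hx, ← smul_mul_assoc, hn, zero_mul]

lemma exists_completeOrthogonalIdempotents_of_card_eq_mul {R : Type*} [Ring R] [Finite R]
    {a b : ℕ} (hab : a.Coprime b) (hR : Nat.card R = a * b) :
    ∃ e₁ e₂ : R, CompleteOrthogonalIdempotents ![e₁, e₂] ∧ IsMulCentral e₁ ∧ IsMulCentral e₂ ∧
      a • e₁ = 0 ∧ b • e₂ = 0 := by
  obtain ⟨u, v, huv⟩ := Nat.isCoprime_iff_coprime.mpr hab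
  have hzero : ∀ z : ℤ, ((z * (a * b) : ℤ) : R) = 0 := fun z => by
    rw [Int.cast_mul, ← Nat.cast_mul, ← hR, Int.cast_natCast, ← nsmul_one, card_nsmul_eq_zero',
      mul_zero]
  refine ⟨((v * b : ℤ) : R), ((u * a : ℤ) : R), ?_, Set.intCast_mem_center R _,
    Set.intCast_mem_center R _, ?_, ?_⟩
  · simp only [CompleteOrthogonalIdempotents.pair_iff'ₛ, ← Int.cast_mul, ← Int.cast_add]
    refine ⟨?_, ?_, by rw [add_comm, huv, Int.cast_one]⟩
    · rw [show v * b * (u * a) = u * v * (a * b) by ring, hzero]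
    · rw [show u * a * (v * b) = u * v * (a * b) by ring, hzero]
  · rw [nsmul_eq_mul, ← Int.cast_natCast, ← Int.cast_mul,
      show (a : ℤ) * (v * b) = v * (a * b) by ring, hzero]
  · rw [nsmul_eq_mul, ← Int.cast_natCast, ← Int.cast_mul,
      show (b : ℤ) * (u * a) = u * (a * b) by ring, hzero]

theorem exists_ringEquiv_prod_of_card_eq_mul {R : Type u} [Ring R] [Finite R] {a b : ℕ}
    (hab : a.Coprime b) (hR : Nat.card R = a * b) :
    ∃ (A B : Type u) (_ : Ring A) (_ : Ring B), Nat.card A = a ∧ Nat.card B = b ∧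
      Nonempty (R ≃+* A × B) := by
  obtain ⟨e₁, e₂, he, he₁, he₂, hae₁, hbe₂⟩ :=
    exists_completeOrthogonalIdempotents_of_card_eq_mul hab hR
  let φ := (he.ringEquivOfIsMulCentral (Fin.forall_fin_two.mpr ⟨he₁, he₂⟩)).trans
    (RingEquiv.piFinTwo _)
  have : Finite (he.idem 0).Corner := Subtype.finite
  have : Finite (he.idem 1).Corner := Subtype.finite
  have hA := hab.coprime_card_of_forall_nsmul_eq_zero ((he.idem 0).nsmul_corner_eq_zero hae₁)
  have hB := hab.symm.coprime_card_of_forall_nsmul_eq_zero ((he.idem 1).nsmul_corner_eq_zero hbe₂)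
  have hcard : Nat.card (he.idem 0).Corner * Nat.card (he.idem 1).Corner = a * b := by
    rw [← Nat.card_prod, ← Nat.card_congr φ.toEquiv, hR]
  exact ⟨_, _, _, _, Nat.eq_of_mul_eq_mul_of_coprime hcard hA hB,
    Nat.eq_of_mul_eq_mul_of_coprime ((mul_comm _ _).trans (hcard.trans (mul_comm _ _))) hB hA,
    ⟨φ⟩⟩

theorem prod_primeFactors_mul_card_potent_le (R : Type u) [Ring R] [Finite R] {k : ℕ}
    (hk : 0 < k) :
    (∏ p ∈ (Nat.card R).primeFactors, p) * Nat.card {x : R // x ^ (k + 1) = x} ≤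
      (k + 1) ^ (Nat.card R).primeFactors.card * Nat.card R := by
  induction h : Nat.card R using Nat.recOnPosPrimePosCoprime generalizing R with
  | zero => exact absurd h Nat.card_pos.ne'
  | one => simpa using (Finite.card_subtype_le fun x : R => x ^ (k + 1) = x).trans h.le
  | prime_pow p n hp hn =>
    have : Nontrivial R :=
      Finite.one_lt_card_iff_nontrivial.mp (h ▸ Nat.one_lt_pow hn.ne' hp.one_lt)
    obtain ⟨q, hq1, hqR, hqT⟩ := exists_one_lt_dvd_card_mul_card_potent_le R hk
    rw [h] at hqR hqT
    obtain ⟨i, -, rfl⟩ := (Nat.dvd_prime_pow hp).mp hqR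
    have hpq : p ≤ p ^ i := Nat.le_self_pow (by rintro rfl; simp at hq1) p
    rw [Nat.primeFactors_prime_pow hn.ne' hp, prod_singleton, card_singleton, pow_one]
    exact (Nat.mul_le_mul_right _ hpq).trans hqT
  | coprime a b ha hb hab iha ihb =>
    obtain ⟨A, B, _, _, hA, hB, ⟨φ⟩⟩ := exists_ringEquiv_prod_of_card_eq_mul hab h
    have : Finite A := Nat.finite_of_card_ne_zero (by omega)
    have : Finite B := Nat.finite_of_card_ne_zero (by omega)
    have hTA := iha A hA
    have hTB := ihb B hB
    rw [card_potent_congr φ.toMulEquiv, card_potent_prod, hab.primeFactors_mul,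
      prod_union hab.disjoint_primeFactors, card_union_of_disjoint hab.disjoint_primeFactors,
      pow_add]
    calc _ = ((∏ p ∈ a.primeFactors, p) * Nat.card {x : A // x ^ (k + 1) = x}) *
          ((∏ p ∈ b.primeFactors, p) * Nat.card {x : B // x ^ (k + 1) = x}) := by ring
      _ ≤ ((k + 1) ^ a.primeFactors.card * a) * ((k + 1) ^ b.primeFactors.card * b) :=
        Nat.mul_le_mul hTA hTB
      _ = _ := by ring

/-- For a finite ring `R` with distinct prime divisors `p₁, …, p_n` of `|R|`, the
number of `(k+1)`-potent elements of `R` is at most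
`((k+1)^n / (p₁ ⋯ p_n)) · |R|^{2k/(k+1)}`. -/
theorem stmt_16 (R : Type) [Ring R] [Fintype R] (k : ℕ) (hk : 1 ≤ k) :
    (Nat.card {x : R // x ^ (k + 1) = x} : ℝ) ≤
      ((k + 1 : ℝ) ^ (Fintype.card R).primeFactors.card /
          ∏ p ∈ (Fintype.card R).primeFactors, (p : ℝ)) *
        (Fintype.card R : ℝ) ^ ((2 * (k : ℝ)) / (k + 1)) := by
  have hmain := prod_primeFactors_mul_card_potent_le R hk
  rw [Nat.card_eq_fintype_card (α := R)] at hmain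
  set N := Fintype.card R
  have hN : (1 : ℝ) ≤ N := by exact_mod_cast Fintype.card_pos
  have hprod : (0 : ℝ) < ∏ p ∈ N.primeFactors, (p : ℝ) :=
    prod_pos fun p hp => by exact_mod_cast (Nat.prime_of_mem_primeFactors hp).pos
  have hexp : (N : ℝ) ≤ (N : ℝ) ^ ((2 * (k : ℝ)) / (k + 1)) := by
    refine Real.self_le_rpow_of_one_le hN ?_
    rw [one_le_div (by positivity)]
    have : (1 : ℝ) ≤ k := by exact_mod_cast hk
    linarith
  rw [div_mul_eq_mul_div, le_div_iff₀ hprod, mul_comm]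
  calc (∏ p ∈ N.primeFactors, (p : ℝ)) * Nat.card {x : R // x ^ (k + 1) = x}
      ≤ (k + 1 : ℝ) ^ N.primeFactors.card * N := by
        have := (Nat.cast_le (α := ℝ)).mpr hmain
        push_cast at this
        exact this
    _ ≤ (k + 1 : ℝ) ^ N.primeFactors.card * (N : ℝ) ^ ((2 * (k : ℝ)) / (k + 1)) := by gcongr
end
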